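/- Let W be endowed with a generalized Euclidean metric G corresponding to the pair (γ, ψ). For any injective linear map f*: V → W, the pullbacks V± := f⃖*W± satisfy V₊ ∩ V₋ = 0 and V ⊕ V* = V₊ ⊕ V₋, so V inherits a generalized Euclidean metric corresponding to the pair (f*γ, f*ψ). -/
import Mathlib


open LinearMap

/-- The pullback `f⃖*U = {(X, f*η) : (f*X, η) ∈ U}`. -/
noncomputable def Pullback {V W : Type*} [AddCommGroup V] [Module ℝ V]
    [AddCommGroup W] [Module ℝ W] (f : V →ₗ[ℝ] W)
    (U : Submodule ℝ (W × Module.Dual ℝ W)) :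
    Submodule ℝ (V × Module.Dual ℝ V) :=
  Submodule.map (LinearMap.prodMap LinearMap.id f.dualMap)
    (Submodule.comap (LinearMap.prodMap f LinearMap.id) U)

theorem pullback_graph {V W : Type*} [AddCommGroup V] [Module ℝ V]
    [AddCommGroup W] [Module ℝ W] (f : V →ₗ[ℝ] W)
    (A : W →ₗ[ℝ] Module.Dual ℝ W) :
    Pullback f (LinearMap.graph A) = LinearMap.graph (f.dualMap ∘ₗ A ∘ₗ f) := by
  ext x
  simp only [Pullback, Submodule.mem_map, Submodule.mem_comap, LinearMap.mem_graph_iff,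
    LinearMap.prodMap_apply, LinearMap.id_coe, id_eq, LinearMap.comp_apply]
  constructor
  · rintro ⟨⟨a, b⟩, hb, hx⟩
    subst hx
    simp only at hb
    simp [hb]
  · intro h
    exact ⟨(x.1, A (f x.1)), rfl, by simp [← h]⟩

/-- Let `W` carry a generalized Euclidean metric given by the pair `(γ, ψ)`,
with eigenspaces `W± = graph((ψ ± γ)♭)`.  For any injective `f : V → W`, the
pullbacks `V± = f⃖*W±` satisfy `V₊ ∩ V₋ = 0` and `V ⊕ V* = V₊ ⊕ V₋`, and they
are the graphs of `(f*ψ ± f*γ)♭`: `V` inherits the generalized metric of the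
pair `(f*γ, f*ψ)`. -/
theorem pullback_generalized_metric
    (V W : Type*) [AddCommGroup V] [Module ℝ V] [FiniteDimensional ℝ V]
    [AddCommGroup W] [Module ℝ W] [FiniteDimensional ℝ W]
    (f : V →ₗ[ℝ] W) (hf : Function.Injective f)
    (gamFl psiFl : W →ₗ[ℝ] Module.Dual ℝ W)
    (hgam_symm : ∀ X Y : W, gamFl X Y = gamFl Y X)
    (hgam_pos : ∀ X : W, X ≠ 0 → 0 < gamFl X X)
    (hpsi : ∀ X Y : W, psiFl X Y = - psiFl Y X) :
    IsCompl (Pullback f (LinearMap.graph (psiFl + gamFl)))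
      (Pullback f (LinearMap.graph (psiFl - gamFl))) ∧
    Pullback f (LinearMap.graph (psiFl + gamFl)) =
      LinearMap.graph (f.dualMap ∘ₗ (psiFl + gamFl) ∘ₗ f) ∧
    Pullback f (LinearMap.graph (psiFl - gamFl)) =
      LinearMap.graph (f.dualMap ∘ₗ (psiFl - gamFl) ∘ₗ f) := by
  set g : V →ₗ[ℝ] Module.Dual ℝ V := f.dualMap ∘ₗ gamFl ∘ₗ f with hg
  set p : V →ₗ[ℝ] Module.Dual ℝ V := f.dualMap ∘ₗ psiFl ∘ₗ f with hp
  have hgapp : ∀ X Y : V, g X Y = gamFl (f X) (f Y) := fun X Y => rfl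
  -- g injective
  have hginj : Function.Injective g := by
    intro X Y hXY
    by_contra hne
    have h1 : g (X - Y) = 0 := by rw [map_sub, hXY, sub_self]
    have h2 : (0:ℝ) < g (X - Y) (X - Y) := by
      rw [hgapp]
      apply hgam_pos
      intro h
      exact hne (hf (by rw [map_sub] at h; exact sub_eq_zero.mp h))
    rw [h1] at h2
    simp at h2
  have hgsurj : Function.Surjective g :=
    (LinearMap.injective_iff_surjective_of_finrank_eq_finrank
      (Subspace.dual_finrank_eq).symm).mp hginj
  have h1 : Pullback f (LinearMap.graph (psiFl + gamFl)) =
      LinearMap.graph (f.dualMap ∘ₗ (psiFl + gamFl) ∘ₗ f) := pullback_graph f _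
  have h2 : Pullback f (LinearMap.graph (psiFl - gamFl)) =
      LinearMap.graph (f.dualMap ∘ₗ (psiFl - gamFl) ∘ₗ f) := pullback_graph f _
  have hBp : f.dualMap ∘ₗ (psiFl + gamFl) ∘ₗ f = p + g := by
    ext x; simp [hp, hg]
  have hBm : f.dualMap ∘ₗ (psiFl - gamFl) ∘ₗ f = p - g := by
    ext x; simp [hp, hg]
  refine ⟨⟨?_, ?_⟩, h1, h2⟩
  · rw [h1, h2, hBp, hBm, Submodule.disjoint_def]
    rintro ⟨x, ξ⟩ hx1 hx2
    rw [LinearMap.mem_graph_iff] at hx1 hx2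
    simp only at hx1 hx2
    have hgx : g x = 0 := by
      have := hx1.symm.trans hx2
      simp only [LinearMap.add_apply, LinearMap.sub_apply] at this
      have h2g : (2:ℝ) • g x = 0 := by
        rw [two_smul]
        linear_combination (norm := module) this
      have := smul_eq_zero.mp h2g
      simpa using this
    have hx0 : x = 0 := by
      by_contra hne
      exact absurd hgx (by intro h; have := hginj (h.trans (map_zero g).symm); exact hne this)
    rw [Prod.ext_iff]
    exact ⟨hx0, by rw [hx1, hx0, map_zero]; rfl⟩
  · rw [h1, h2, hBp, hBm, codisjoint_iff_le_sup]
    rintro ⟨x, ξ⟩ -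
    obtain ⟨u, hu⟩ := hgsurj (ξ - p x)
    have hmem : ((x, ξ) : V × Module.Dual ℝ V) =
        ((2:ℝ)⁻¹ • (x + u), (p + g) ((2:ℝ)⁻¹ • (x + u))) +
        ((2:ℝ)⁻¹ • (x - u), (p - g) ((2:ℝ)⁻¹ • (x - u))) := by
      ext y
      · simp only [Prod.fst_add]
        rw [smul_add, smul_sub]
        module
      · simp only [Prod.snd_add]
        simp only [map_smul, map_add, map_sub, LinearMap.add_apply, LinearMap.sub_apply]
        have : ξ = p x + g u := by rw [hu]; abel
        rw [this]
        simp only [LinearMap.add_apply, LinearMap.smul_apply, LinearMap.sub_apply,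
          smul_eq_mul]
        ring
    rw [hmem]
    exact Submodule.add_mem_sup ((LinearMap.mem_graph_iff _ _).mpr rfl)
      ((LinearMap.mem_graph_iff _ _).mpr rfl)
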